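/- arXiv:math/0401269 — 3 statements merged into one kernel-verified Lean document; each statement's English description precedes it below -/
import Mathlib

section
/- Let u = x_1^2 x_2^{ℓ} be the cyclic word in F_2 with ℓ ≥ 1. Then the set Λ(u) has cardinality |u| − 1 = ℓ + 1. -/
/-- The free group of rank `n`. -/
abbrev FG (n : ℕ) := FreeGroup (Fin n)

/-- Cyclic words in `F_n`, i.e. conjugacy classes. -/
abbrev CW (n : ℕ) := ConjClasses (FG n)

/-- The (reduced) word length of an element of the free group. -/
def wlen {n : ℕ} (g : FG n) : ℕ := g.toWord.length

/-- The length of a cyclic word: the minimal word length over the conjugacy class. -/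
noncomputable def cwLen {n : ℕ} (c : CW n) : ℕ :=
  sInf (wlen '' {g | ConjClasses.mk g = c})

/-- The automorphic orbit of a cyclic word. -/
def orb {n : ℕ} (u : CW n) : Set (CW n) :=
  {v | ∃ φ : FG n ≃* FG n, ConjClasses.map (φ : FG n →* FG n) u = v}

/-- `N(u)`: the number of cyclic words in the orbit of `u` having the same length as `u`. -/
noncomputable def Ncount {n : ℕ} (u : CW n) : ℕ :=
  Set.ncard {v | v ∈ orb u ∧ cwLen v = cwLen u}

/-- The total number of occurrences of `x_i^{±1}` in (the reduced word of) `g`. -/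
def occ {n : ℕ} (g : FG n) (i : Fin n) : ℕ := (g.toWord.map Prod.fst).count i

/-- The total number of occurrences of `x_i^{±1}` in a cyclic word, read off from a
minimal-length representative. -/
noncomputable def occCW {n : ℕ} (u : CW n) (i : Fin n) : ℕ :=
  sInf ((fun g => occ g i) '' {g | ConjClasses.mk g = u ∧ wlen g = cwLen u})

/-- Hypothesis 1.1: (i) `u` has minimal length in its automorphic orbit; (ii) if
`x_i^{±1}` and `x_j^{±1}` (`i < j`) both occur in `u`, then `x_i^{±1}` occurs strictly
fewer times than `x_j^{±1}`. -/
def Hyp {n : ℕ} (u : CW n) : Prop :=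
  (∀ v ∈ orb u, cwLen u ≤ cwLen v) ∧
  (∀ i j : Fin n, i < j → occCW u i ≠ 0 → occCW u j ≠ 0 → occCW u i < occCW u j)

/-- The element of the free group corresponding to a letter in `Σ`. -/
def lett {n : ℕ} (p : Fin n × Bool) : FG n := cond p.2 (FreeGroup.of p.1) (FreeGroup.of p.1)⁻¹

/-- The endomorphism of `F_n` determined by the Whitehead data `(A, a)`:
`x ↦ xa` if `x ∈ A, x⁻¹ ∉ A`; `x ↦ a⁻¹xa` if `x, x⁻¹ ∈ A`; `x ↦ x` otherwise. -/
def wmap {n : ℕ} (A : Finset (Fin n × Bool)) (a : Fin n × Bool) : FG n →* FG n :=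
  FreeGroup.lift (fun i =>
    if (i, true) ∈ A then
      (if (i, false) ∈ A then (lett a)⁻¹ * FreeGroup.of i * lett a
       else FreeGroup.of i * lett a)
    else
      (if (i, false) ∈ A then (lett a)⁻¹ * FreeGroup.of i
       else FreeGroup.of i))

/-- The degree of the Whitehead data `A`: the largest (1-based) index `i` such that
exactly one of `x_i, x_i⁻¹` lies in `A`, or `0` if there is no such index. -/
def wdeg {n : ℕ} (A : Finset (Fin n × Bool)) : ℕ :=
  (Finset.univ.filter (fun i : Fin n =>
      ((i, true) ∈ A ∧ (i, false) ∉ A) ∨ ((i, false) ∈ A ∧ (i, true) ∉ A))).sup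
    (fun i => (i : ℕ) + 1)

/-- A Whitehead automorphism of the second type, subject to the Section 2 convention
that the multiplier `a = x_j^{±1}` satisfies `j > deg`. -/
structure Wh (n : ℕ) where
  A : Finset (Fin n × Bool)
  a : Fin n × Bool
  mem : a ∉ A
  invMem : (a.1, !a.2) ∉ A
  conv : wdeg A ≤ (a.1 : ℕ)

def Wh.deg {n : ℕ} (σ : Wh n) : ℕ := wdeg σ.A

/-- Action of a Whitehead automorphism on cyclic words. -/
def Wh.act {n : ℕ} (σ : Wh n) (c : CW n) : CW n := ConjClasses.map (wmap σ.A σ.a) c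

/-- Apply a list of Whitehead automorphisms, leftmost first. -/
def applyList {n : ℕ} (L : List (Wh n)) (c : CW n) : CW n := L.foldl (fun c σ => σ.act c) c

/-- `Ω_k(v)`: cyclic words obtained from `v` by a nonempty composition `α_t ⋯ α_1` of
Whitehead automorphisms of the second type with `k = deg α_t ≥ ⋯ ≥ deg α_1` which
preserves the length of `v` at every stage. -/
def Omega {n : ℕ} (k : ℕ) (v : CW n) : Set (CW n) :=
  {w | ∃ L : List (Wh n), L ≠ [] ∧
        (L.map Wh.deg).Chain' (· ≤ ·) ∧
        (L.map Wh.deg).getLast? = some k ∧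
        (∀ m : ℕ, 1 ≤ m → m ≤ L.length → cwLen (applyList (L.take m) v) = cwLen v) ∧
        w = applyList L v}

/-- `M_k(v)`: the cardinality of `Ω_k(v)`. -/
noncomputable def Mcount {n : ℕ} (k : ℕ) (v : CW n) : ℕ := (Omega k v).ncard

/-- `x_k` (1-based indexing) as an element of `F_n`; junk value `1` out of range. -/
def gen (n k : ℕ) : FG n := if h : k - 1 < n then FreeGroup.of ⟨k - 1, h⟩ else 1

/-- The word `u = x_1^2 x_2 (x_2 x_n x_2⁻¹ x_n) x_2 x_3 (x_3 x_n x_3⁻¹ x_n)^2 x_3 ⋯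
x_{n-1} (x_{n-1} x_n x_{n-1}⁻¹ x_n)^{n-2} x_{n-1} x_n^ℓ` of Section 4. -/
def uWord (n ℓ : ℕ) : FG n :=
  (gen n 1) ^ 2 *
    ((List.range (n - 2)).map (fun j =>
        gen n (j + 2) *
          (gen n (j + 2) * gen n n * (gen n (j + 2))⁻¹ * gen n n) ^ (j + 1) *
          gen n (j + 2))).prod *
    (gen n n) ^ ℓ

/-- The Whitehead automorphism `({x_1}, x_2^{±1})` of `F_2` (`b = true` for `x_2`). -/
def tau2 (b : Bool) : FG 2 →* FG 2 := wmap {((0 : Fin 2), true)} ((1 : Fin 2), b)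

/-- `Λ(u)`: cyclic words of the form `τ^k(u)` where `τ` is `({x_1}, x_2)` or
`({x_1}, x_2⁻¹)` and the length of `u` is preserved at every stage. -/
def Lam (u : CW 2) : Set (CW 2) :=
  {v | ∃ b : Bool, ∃ k : ℕ, v = (ConjClasses.map (tau2 b))^[k] u ∧
        ∀ i : ℕ, 1 ≤ i → i ≤ k → cwLen ((ConjClasses.map (tau2 b))^[i] u) = cwLen u}

/-!
Every iterate `τ^k(x₁² x₂^ℓ)` is the class of `x₁ x₂^a x₁ x₂^b` with `a = ±k`, `b = ℓ ± k`.
Such a word is cyclically reduced, and a cyclically reduced word is shortest in its conjugacy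
class (compare `n`-th powers, where a conjugator costs only a bounded amount), so its cyclic
length is `|a| + |b| + 2`. Hence `({x₁}, x₂)` lengthens `u` at once, while `({x₁}, x₂⁻¹)`
preserves the length exactly for `k ≤ ℓ`; the exponent sum `ℓ - 2k` of `x₂` tells these
`ℓ + 1` words apart.
-/

namespace FreeGroup

variable {α : Type*} {x y : α}

theorem isReduced_cons_replicate (hxy : x ≠ y) (n : ℕ) (s : Bool) :
    IsReduced ((x, true) :: List.replicate n (y, s)) := by
  rcases n with _ | n
  · exact IsReduced.singleton
  · rw [List.replicate_succ, isReduced_cons_cons, ← List.replicate_succ]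
    exact ⟨fun h => absurd h hxy, List.isChain_replicate_of_rel _ fun _ => rfl⟩

theorem snd_eq_true_of_mem_getLast?_cons_replicate (hxy : x ≠ y) {n : ℕ} {s : Bool}
    {p : α × Bool} (hp : p ∈ ((x, true) :: List.replicate n (y, s)).getLast?) (hpx : p.1 = x) :
    p.2 = true := by
  rcases List.mem_cons.mp (List.mem_of_getLast? hp) with rfl | hp
  · rfl
  · exact absurd ((List.eq_of_mem_replicate hp ▸ hpx).symm) hxy

theorem isCyclicallyReduced_cons_replicate_append_cons_replicate (hxy : x ≠ y) (n m : ℕ)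
    (s t : Bool) :
    IsCyclicallyReduced
      ((x, true) :: List.replicate n (y, s) ++ (x, true) :: List.replicate m (y, t)) := by
  refine ⟨?_, fun p hp q hq => ?_⟩
  · refine List.isChain_append.mpr
      ⟨isReduced_cons_replicate hxy n s, isReduced_cons_replicate hxy m t, fun p hp q hq => ?_⟩
    obtain rfl : (x, true) = q := by simpa using hq
    exact fun hpx => snd_eq_true_of_mem_getLast?_cons_replicate hxy hp hpx
  · obtain rfl : (x, true) = q := by simpa using hq
    rw [List.getLast?_append_cons] at hp
    exact fun hpx => snd_eq_true_of_mem_getLast?_cons_replicate hxy hp hpx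

variable [DecidableEq α]

theorem norm_pow_le (g : FreeGroup α) (n : ℕ) : norm (g ^ n) ≤ n * norm g := by
  induction n with
  | zero => simp
  | succ n ih =>
    calc norm (g ^ (n + 1)) ≤ norm (g ^ n) + norm g := pow_succ g n ▸ norm_mul_le _ _
      _ ≤ (n + 1) * norm g := by rw [add_one_mul]; exact Nat.add_le_add_right ih _

theorem IsCyclicallyReduced.norm_mk_pow {L : List (α × Bool)} (hL : IsCyclicallyReduced L)
    (n : ℕ) : norm (mk L ^ n) = n * L.length := by
  rw [norm, pow_mk, toWord_mk, (hL.flatten_replicate n).isReduced.reduce_eq]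
  simp

/-- For `g = c (mk L) c⁻¹` and every `n`, `n |L| = ‖(mk L)^n‖ ≤ 2‖c‖ + n‖g‖`. -/
theorem IsCyclicallyReduced.length_le_norm_of_isConj {L : List (α × Bool)}
    (hL : IsCyclicallyReduced L) {g : FreeGroup α} (hg : IsConj (mk L) g) :
    L.length ≤ norm g := by
  obtain ⟨c, rfl⟩ := isConj_iff.mp hg
  set n := 2 * norm c + 1
  have hpow : mk L ^ n = c⁻¹ * (c * mk L * c⁻¹) ^ n * c := by rw [conj_pow]; group
  have : n * L.length < n * (norm (c * mk L * c⁻¹) + 1) :=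
    calc n * L.length = norm (mk L ^ n) := (hL.norm_mk_pow n).symm
      _ ≤ norm c + n * norm (c * mk L * c⁻¹) + norm c := by
        rw [hpow]
        grw [norm_mul_le, norm_mul_le, norm_inv_eq, norm_pow_le]
      _ < n * (norm (c * mk L * c⁻¹) + 1) := by rw [mul_add_one]; omega
  exact Nat.lt_succ_iff.mp (Nat.lt_of_mul_lt_mul_left this)

theorem toWord_of_zpow (y : α) (a : ℤ) :
    (of y ^ a).toWord = List.replicate a.natAbs (y, decide (0 ≤ a)) := by
  obtain ⟨n, rfl | rfl⟩ := Int.eq_nat_or_neg a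
  · simp
  · rcases n with _ | n
    · simp
    · rw [zpow_neg, zpow_natCast, toWord_inv, toWord_of_pow]
      simp [invRev]
      omega

theorem toWord_of_mul_of_zpow (hxy : x ≠ y) (a : ℤ) :
    (of x * of y ^ a).toWord = (x, true) :: List.replicate a.natAbs (y, decide (0 ≤ a)) := by
  rw [toWord_mul, toWord_of, toWord_of_zpow, List.singleton_append,
    (isReduced_cons_replicate hxy _ _).reduce_eq]

theorem toWord_of_mul_zpow_mul_of_mul_zpow (hxy : x ≠ y) (a b : ℤ) :
    (of x * of y ^ a * (of x * of y ^ b)).toWord =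
      (x, true) :: List.replicate a.natAbs (y, decide (0 ≤ a)) ++
        (x, true) :: List.replicate b.natAbs (y, decide (0 ≤ b)) := by
  rw [toWord_mul, toWord_of_mul_of_zpow hxy, toWord_of_mul_of_zpow hxy,
    (isCyclicallyReduced_cons_replicate_append_cons_replicate hxy _ _ _ _).isReduced.reduce_eq]

end FreeGroup

theorem ConjClasses.iterate_map_mk {G : Type*} [Monoid G] (f : G →* G) (k : ℕ) (g : G) :
    (ConjClasses.map f)^[k] (ConjClasses.mk g) = ConjClasses.mk (f^[k] g) :=
  (Function.Semiconj.iterate_right (f := ConjClasses.mk) (fun _ => rfl) k g).symm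

open FreeGroup

theorem cwLen_mk_of_isCyclicallyReduced {n : ℕ} {g : FG n}
    (hg : IsCyclicallyReduced g.toWord) : cwLen (ConjClasses.mk g) = g.norm := by
  refine le_antisymm (Nat.sInf_le ⟨g, rfl, rfl⟩) (le_csInf ⟨_, g, rfl, rfl⟩ ?_)
  rintro _ ⟨h, hh, rfl⟩
  rw [← mk_toWord (x := g)] at hh
  exact hg.length_le_norm_of_isConj (ConjClasses.mk_eq_mk_iff_isConj.mp hh.symm)

/-- Every `τ^k(x₁² x₂^ℓ)` is the class of some `x₁ x₂^a x₁ x₂^b`. -/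
def x1x2Word (a b : ℤ) : FG 2 := of 0 * of 1 ^ a * (of 0 * of 1 ^ b)

theorem cwLen_mk_x1x2Word (a b : ℤ) :
    cwLen (ConjClasses.mk (x1x2Word a b)) = a.natAbs + b.natAbs + 2 := by
  have hw := toWord_of_mul_zpow_mul_of_mul_zpow (x := (0 : Fin 2)) (y := 1) (by decide) a b
  rw [cwLen_mk_of_isCyclicallyReduced, FreeGroup.norm, x1x2Word, hw]
  · simp only [List.length_append, List.length_cons, List.length_replicate]
    omega
  · rw [x1x2Word, hw]
    exact isCyclicallyReduced_cons_replicate_append_cons_replicate (by decide) _ _ _ _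

theorem add_eq_add_of_mk_x1x2Word_eq {a b c d : ℤ}
    (h : ConjClasses.mk (x1x2Word a b) = ConjClasses.mk (x1x2Word c d)) : a + b = c + d := by
  let x2ExpSum : FG 2 →* Multiplicative ℤ := FreeGroup.lift ![1, Multiplicative.ofAdd 1]
  have := isConj_iff_eq.mp (x2ExpSum.map_isConj (ConjClasses.mk_eq_mk_iff_isConj.mp h))
  simpa [x2ExpSum, x1x2Word] using congrArg Multiplicative.toAdd this

theorem tau2_x1x2Word (s : Bool) (a b : ℤ) :
    tau2 s (x1x2Word a b) = x1x2Word (a + cond s 1 (-1)) (b + cond s 1 (-1)) := by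
  cases s <;> simp [tau2, wmap, x1x2Word, lett, zpow_add] <;> group

theorem iterate_tau2_x1x2Word (s : Bool) (k : ℕ) (a b : ℤ) :
    (tau2 s)^[k] (x1x2Word a b) =
      x1x2Word (a + k * cond s 1 (-1)) (b + k * cond s 1 (-1)) := by
  induction k with
  | zero => simp
  | succ k ih => rw [Function.iterate_succ_apply', ih, tau2_x1x2Word]; push_cast; ring_nf

theorem mem_Lam_mk_x1x2Word_iff (ℓ : ℕ) (v : CW 2) :
    v ∈ Lam (ConjClasses.mk (x1x2Word 0 ℓ)) ↔
      ∃ k ≤ ℓ, v = ConjClasses.mk (x1x2Word (-k) (ℓ - k)) := by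
  simp only [Lam, Set.mem_ofPred_eq, ConjClasses.iterate_map_mk, iterate_tau2_x1x2Word,
    cwLen_mk_x1x2Word]
  constructor
  · rintro ⟨s, k, rfl, hk⟩
    cases s
    · refine ⟨k, ?_, by simp [sub_eq_add_neg]⟩
      by_contra hkℓ
      have := hk (ℓ + 1) (by omega) (by omega)
      simp only [cond_false, mul_one, mul_neg] at this
      omega
    · obtain rfl : k = 0 := by
        by_contra hk0
        have := hk 1 le_rfl (by omega)
        simp only [cond_true, mul_one] at this
        omega
      exact ⟨0, Nat.zero_le ℓ, by simp⟩
  · rintro ⟨k, hk, rfl⟩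
    refine ⟨false, k, by simp [sub_eq_add_neg], fun i _ hi => ?_⟩
    simp only [cond_false, mul_one, mul_neg]
    omega

theorem Lam_card_x1sq_x2pow_general (ℓ : ℕ) (u : CW 2)
    (hu : u = ConjClasses.mk
      ((FreeGroup.of (0 : Fin 2)) ^ 2 * (FreeGroup.of (1 : Fin 2)) ^ ℓ)) :
    (Lam u).ncard = cwLen u - 1 ∧ cwLen u - 1 = ℓ + 1 := by
  have hu' : u = ConjClasses.mk (x1x2Word 0 ℓ) := by
    rw [hu, x1x2Word, zpow_natCast, zpow_zero, mul_one, ← mul_assoc, ← sq]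
  have hlen : cwLen u = ℓ + 2 := by rw [hu', cwLen_mk_x1x2Word]; simp
  have hLam : Lam u = (fun k : ℕ => ConjClasses.mk (x1x2Word (-k) (ℓ - k))) '' Set.Iic ℓ := by
    ext v
    simp [hu', mem_Lam_mk_x1x2Word_iff, eq_comm]
  have hinj : Function.Injective fun k : ℕ => ConjClasses.mk (x1x2Word (-k) (ℓ - k)) :=
    fun k k' h => by have := add_eq_add_of_mk_x1x2Word_eq h; omega
  rw [hLam, Set.ncard_image_of_injective _ hinj, hlen, ← Finset.coe_Iic, Set.ncard_coe_finset,
    Nat.card_Iic]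
  omega

/-- For `u = x_1^2 x_2^ℓ` (`ℓ ≥ 1`), the set `Λ(u)` has cardinality `|u| - 1 = ℓ + 1`. -/
theorem Lam_card_x1sq_x2pow (ℓ : ℕ) (hl : 1 ≤ ℓ) (u : CW 2)
    (hu : u = ConjClasses.mk
      ((FreeGroup.of (0 : Fin 2)) ^ 2 * (FreeGroup.of (1 : Fin 2)) ^ ℓ)) :
    (Lam u).ncard = cwLen u - 1 ∧ cwLen u - 1 = ℓ + 1 :=
  Lam_card_x1sq_x2pow_general ℓ u hu
end

section
/- Let u = x_1 x_2^{ℓ_1} x_1^{-1} x_2^{ℓ_2} be the cyclic word in F_2 with ℓ_1, ℓ_2 ≥ 1 and ℓ_1 ≠ ℓ_2 (so that u is cyclically reduced). Then the set Λ(u) has cardinality 1, i.e. Λ(u) = {u}. -/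
/-
Both automorphisms `x₁ ↦ x₁ x₂^{±1}` fix `x₂` and send `x₁ x₂^m x₁⁻¹` to
`x₁ x₂^{±1} x₂^m x₂^{∓1} x₁⁻¹ = x₁ x₂^m x₁⁻¹`, so they fix `u` already as an element of `F₂`.
Every iterate then fixes the cyclic word `u`, and `Λ(u)` collapses to `{u}`.
-/

lemma tau2_of_zero (b : Bool) :
    tau2 b (FreeGroup.of 0) = FreeGroup.of 0 * lett ((1 : Fin 2), b) := by
  simp [tau2, wmap]

lemma tau2_of_one (b : Bool) : tau2 b (FreeGroup.of 1) = FreeGroup.of 1 := by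
  simp [tau2, wmap]

lemma tau2_conj_zpow (b : Bool) (m : ℤ) :
    tau2 b (FreeGroup.of 0 * FreeGroup.of 1 ^ m * (FreeGroup.of 0)⁻¹) =
      FreeGroup.of 0 * FreeGroup.of 1 ^ m * (FreeGroup.of 0)⁻¹ := by
  simp only [map_mul, map_zpow, map_inv, tau2_of_zero, tau2_of_one]
  cases b <;> simp only [lett, cond_true, cond_false] <;> group

lemma tau2_conj_pow_mul_pow (b : Bool) (ℓ₁ ℓ₂ : ℕ) :
    tau2 b (FreeGroup.of 0 * FreeGroup.of 1 ^ ℓ₁ * (FreeGroup.of 0)⁻¹ * FreeGroup.of 1 ^ ℓ₂) =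
      FreeGroup.of 0 * FreeGroup.of 1 ^ ℓ₁ * (FreeGroup.of 0)⁻¹ * FreeGroup.of 1 ^ ℓ₂ := by
  have h := tau2_conj_zpow b ℓ₁
  rw [zpow_natCast] at h
  rw [map_mul, h, map_pow, tau2_of_one]

lemma Lam_eq_singleton_of_forall_map_eq {u : CW 2}
    (hfix : ∀ b, ConjClasses.map (tau2 b) u = u) : Lam u = {u} := by
  ext v
  constructor
  · rintro ⟨b, k, rfl, -⟩
    exact Function.iterate_fixed (hfix b) k
  · rintro rfl
    exact ⟨true, 0, rfl, fun i hi hik => by omega⟩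

theorem Lam_eq_singleton_conj_word_general (ℓ₁ ℓ₂ : ℕ) (u : CW 2)
    (hu : u = ConjClasses.mk
      (FreeGroup.of (0 : Fin 2) * (FreeGroup.of (1 : Fin 2)) ^ ℓ₁ *
        (FreeGroup.of (0 : Fin 2))⁻¹ * (FreeGroup.of (1 : Fin 2)) ^ ℓ₂)) :
    Lam u = {u} := by
  refine Lam_eq_singleton_of_forall_map_eq fun b => ?_
  rw [hu]
  exact congrArg ConjClasses.mk (tau2_conj_pow_mul_pow b ℓ₁ ℓ₂)

/-- For `u = x_1 x_2^{ℓ_1} x_1⁻¹ x_2^{ℓ_2}` (`ℓ_1, ℓ_2 ≥ 1`, `ℓ_1 ≠ ℓ_2`), `Λ(u) = {u}`. -/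
theorem Lam_eq_singleton_conj_word (ℓ₁ ℓ₂ : ℕ) (h1 : 1 ≤ ℓ₁) (h2 : 1 ≤ ℓ₂)
    (hne : ℓ₁ ≠ ℓ₂) (u : CW 2)
    (hu : u = ConjClasses.mk
      (FreeGroup.of (0 : Fin 2) * (FreeGroup.of (1 : Fin 2)) ^ ℓ₁ *
        (FreeGroup.of (0 : Fin 2))⁻¹ * (FreeGroup.of (1 : Fin 2)) ^ ℓ₂)) :
    Lam u = {u} :=
  Lam_eq_singleton_conj_word_general ℓ₁ ℓ₂ u hu
end

section
/- Let u be a cyclic word in F_2 whose length |u| is minimal over all cyclic words in its automorphic orbit Orb_{Aut F_2}(u), and suppose the total number m of occurrences of x_1^{±1} in u is odd. Then for τ equal to either ({x_1}, x_2) or ({x_1}, x_2^{-1}) one has |τ(u)| > |u|; consequently Λ(u) = {u} has cardinality 1. -/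
/-!
Reducing word length modulo 2 is a homomorphism `F₂ → ℤ/2`, so it is constant on conjugacy
classes and the length of a cyclic word is congruent to that of any representative. The
transvection `τ : x₁ ↦ x₁x₂^{±1}` adds one letter `x₂^{±1}` for each letter `x₁^{±1}`, hence
`|τ(u)| ≡ |u| + m (mod 2)`. For odd `m` this gives `|τ(u)| ≠ |u|`, and as `τ(u)` lies in the
orbit of the minimal-length `u`, `|τ(u)| > |u|`. So already the first step of any `τ^k(u)`,
`k ≥ 1`, changes the length, and `Λ(u) = {u}`.
-/

open FreeGroup

section ParityCharacter

variable {α : Type*}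

def parityChar (f : α → ZMod 2) : FreeGroup α →* Multiplicative (ZMod 2) :=
  FreeGroup.lift fun i => .ofAdd (f i)

theorem parityChar_apply [DecidableEq α] (f : α → ZMod 2) (g : FreeGroup α) :
    parityChar f g = .ofAdd (g.toWord.map (f ∘ Prod.fst)).sum := by
  have inv_letter : ∀ x : α × Bool,
      cond x.2 (Multiplicative.ofAdd (f x.1)) (Multiplicative.ofAdd (f x.1))⁻¹ =
        .ofAdd (f x.1) := by
    rintro ⟨i, _ | _⟩ <;> simp [← ofAdd_neg, CharTwo.neg_eq]
  conv_lhs => rw [← mk_toWord (x := g)]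
  simp only [parityChar, lift_mk, inv_letter, ofAdd_list_prod, List.map_map]
  rfl

theorem parityChar_one_apply [DecidableEq α] (g : FreeGroup α) :
    parityChar 1 g = .ofAdd (g.toWord.length : ZMod 2) := by
  rw [parityChar_apply]
  congr 1
  simp [Pi.one_def, Function.comp_def]

theorem parityChar_single_apply [DecidableEq α] (i : α) (g : FreeGroup α) :
    parityChar (Pi.single i 1) g = .ofAdd ((g.toWord.map Prod.fst).count i : ZMod 2) := by
  rw [parityChar_apply, ← List.map_map]
  congr 1
  induction g.toWord.map Prod.fst with
  | nil => rfl
  | cons j L ih =>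
    by_cases h : j = i
    · simp [h, ih, add_comm]
    · simp [h, ih]

theorem parityChar_eq_of_mk_eq_mk (f : α → ZMod 2) {g g' : FreeGroup α}
    (h : ConjClasses.mk g = ConjClasses.mk g') : parityChar f g = parityChar f g' :=
  isConj_iff_eq.mp ((parityChar f).map_isConj (ConjClasses.mk_eq_mk_iff_isConj.mp h))

end ParityCharacter

section CyclicWords

variable {n : ℕ}

theorem cast_wlen_eq_of_mk_eq_mk {g g' : FG n} (h : ConjClasses.mk g = ConjClasses.mk g') :
    (wlen g : ZMod 2) = wlen g' := by
  have := parityChar_eq_of_mk_eq_mk 1 h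
  rwa [parityChar_one_apply, parityChar_one_apply, Multiplicative.ofAdd.injective.eq_iff] at this

theorem cast_occ_eq_of_mk_eq_mk {g g' : FG n} (h : ConjClasses.mk g = ConjClasses.mk g')
    (i : Fin n) : (occ g i : ZMod 2) = occ g' i := by
  have := parityChar_eq_of_mk_eq_mk (Pi.single i 1) h
  rwa [parityChar_single_apply, parityChar_single_apply,
    Multiplicative.ofAdd.injective.eq_iff] at this

theorem exists_mk_eq_and_wlen_eq_cwLen (c : CW n) :
    ∃ g, ConjClasses.mk g = c ∧ wlen g = cwLen c := by
  obtain ⟨g, rfl⟩ := ConjClasses.mk_surjective c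
  exact Nat.sInf_mem (s := wlen '' {g' | ConjClasses.mk g' = ConjClasses.mk g})
    ⟨wlen g, g, rfl, rfl⟩

theorem cast_cwLen_mk (g : FG n) : (cwLen (ConjClasses.mk g) : ZMod 2) = wlen g := by
  obtain ⟨g', hg', hlen⟩ := exists_mk_eq_and_wlen_eq_cwLen (ConjClasses.mk g)
  rw [← hlen, cast_wlen_eq_of_mk_eq_mk hg']

theorem cast_occCW_mk (g : FG n) (i : Fin n) :
    (occCW (ConjClasses.mk g) i : ZMod 2) = occ g i := by
  obtain ⟨g', hg', hlen⟩ := exists_mk_eq_and_wlen_eq_cwLen (ConjClasses.mk g)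
  obtain ⟨g'', ⟨hg'', -⟩, hocc⟩ :=
    Nat.sInf_mem (s := (occ · i) '' {g | ConjClasses.mk g = _ ∧ wlen g = _})
      ⟨occ g' i, g', ⟨hg', hlen⟩, rfl⟩
  rw [occCW, ← hocc, cast_occ_eq_of_mk_eq_mk hg'']

end CyclicWords

theorem lett_flip {n : ℕ} (p : Fin n × Bool) : lett (p.1, !p.2) = (lett p)⁻¹ := by
  obtain ⟨j, _ | _⟩ := p <;> simp [lett]

section Transvection

variable {n : ℕ} (i : Fin n) (a : Fin n × Bool)

theorem wmap_single_of_self : wmap {(i, true)} a (of i) = of i * lett a := by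
  simp [wmap]

theorem wmap_single_of_ne {k : Fin n} (hk : k ≠ i) : wmap {(i, true)} a (of k) = of k := by
  simp [wmap, hk]

variable {i a}

theorem wmap_single_flip_comp (h : a.1 ≠ i) :
    (wmap {(i, true)} (a.1, !a.2)).comp (wmap {(i, true)} a) = MonoidHom.id (FG n) := by
  refine FreeGroup.ext_hom _ _ fun k => ?_
  rcases eq_or_ne k i with rfl | hk
  · obtain ⟨j, _ | _⟩ := a <;> simp [wmap_single_of_self, wmap_single_of_ne _ _ h, lett]
  · simp [wmap_single_of_ne _ _ hk]

theorem map_wmap_single_mem_orb (h : a.1 ≠ i) (u : CW n) :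
    ConjClasses.map (wmap {(i, true)} a) u ∈ orb u :=
  ⟨MonoidHom.toMulEquiv _ _ (wmap_single_flip_comp h)
    (by simpa using wmap_single_flip_comp (a := (a.1, !a.2)) h), rfl⟩

variable (i a)

theorem cast_wlen_wmap_single (g : FG n) :
    (wlen (wmap {(i, true)} a g) : ZMod 2) = wlen g + occ g i := by
  have hom : (parityChar 1).comp (wmap {(i, true)} a) =
      parityChar 1 * parityChar (Pi.single i 1) := by
    refine FreeGroup.ext_hom _ _ fun k => ?_
    rcases eq_or_ne k i with rfl | hk
    · obtain ⟨j, _ | _⟩ := a <;>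
        simp [parityChar, wmap_single_of_self, lett, ← ofAdd_add, CharTwo.add_self_eq_zero]
    · simp [parityChar, wmap_single_of_ne _ _ hk, hk]
  have := DFunLike.congr_fun hom g
  simp only [MonoidHom.comp_apply, MonoidHom.mul_apply, parityChar_one_apply,
    parityChar_single_apply, ← ofAdd_add] at this
  exact Multiplicative.ofAdd.injective this

theorem cast_cwLen_map_wmap_single (u : CW n) :
    (cwLen (ConjClasses.map (wmap {(i, true)} a) u) : ZMod 2) = cwLen u + occCW u i := by
  obtain ⟨g, rfl⟩ := ConjClasses.mk_surjective u
  exact (cast_cwLen_mk _).trans <| by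
    rw [cast_wlen_wmap_single, cast_cwLen_mk, cast_occCW_mk]

end Transvection

theorem cwLen_lt_map_wmap_single {n : ℕ} {i : Fin n} {a : Fin n × Bool} {u : CW n}
    (h : a.1 ≠ i) (hmin : ∀ v ∈ orb u, cwLen u ≤ cwLen v) (hodd : Odd (occCW u i)) :
    cwLen u < cwLen (ConjClasses.map (wmap {(i, true)} a) u) := by
  refine (hmin _ (map_wmap_single_mem_orb h u)).lt_of_ne fun heq => ?_
  have parity := cast_cwLen_map_wmap_single i a u
  rw [← heq, hodd.natCast_zmod_two] at parity
  exact one_ne_zero (left_eq_add.mp parity)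

theorem Lam_eq_singleton_of_forall_lt {u : CW 2}
    (h : ∀ b, cwLen u < cwLen (ConjClasses.map (tau2 b) u)) : Lam u = {u} := by
  ext v
  constructor
  · rintro ⟨b, _ | k, rfl, hpres⟩
    · rfl
    · have := hpres 1 le_rfl (by omega)
      rw [Function.iterate_one] at this
      exact absurd this (h b).ne'
  · rintro rfl
    exact ⟨true, 0, rfl, fun _ _ _ => by omega⟩

/-- If `u` has minimal length in its automorphic orbit and the number `m` of occurrences
of `x_1^{±1}` in `u` is odd, then both `({x_1}, x_2)` and `({x_1}, x_2⁻¹)` strictly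
increase the length of `u`; consequently `Λ(u) = {u}`, of cardinality `1`. -/
theorem Lam_eq_singleton_of_odd (u : CW 2)
    (hmin : ∀ v ∈ orb u, cwLen u ≤ cwLen v)
    (hodd : Odd (occCW u 0)) :
    (∀ b : Bool, cwLen u < cwLen (ConjClasses.map (tau2 b) u)) ∧
      Lam u = {u} ∧ (Lam u).ncard = 1 := by
  have hlt (b : Bool) : cwLen u < cwLen (ConjClasses.map (tau2 b) u) :=
    cwLen_lt_map_wmap_single one_ne_zero hmin hodd
  have hLam := Lam_eq_singleton_of_forall_lt hlt
  exact ⟨hlt, hLam, by rw [hLam, Set.ncard_singleton]⟩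
end
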